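/- arXiv:2506.17841 — 3 statements merged into one kernel-verified Lean document; each statement's English description precedes it below -/
import Mathlib

section
/- Under the hypotheses above (λ > 0, α ≥ 0, ‖g(t)‖ ≤ C, sF(s) ≤ -αs²), set R² := 1 + C²/(λ(λ+2α)). For every r > R there exists L(r) := (1/(λ+2α))·ln(r² - R² + 1) such that every solution v with ‖v(0)‖ ≤ r satisfies ‖v(t)‖ ≤ R for all t ≥ L(r). Hence the closed ball B[0, R] is an absorbing set. -/
/-!
Comparison with the linear equation `y' = -β y + K` (Grönwall) gives
`‖v t‖² ≤ (‖v 0‖² - K/β) e^{-βt} + K/β` with `β = λ + 2α`, `K = C²/λ`, and `K/β = R² - 1`.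
Once `e^{-βt} ≤ 1/(r² - R² + 1)`, the first term is at most `1`, so `‖v t‖² ≤ R²`.
-/

open Real

theorem le_exp_decay_of_hasDerivAt_le {y y' : ℝ → ℝ} {β K a : ℝ} (hβ : β ≠ 0)
    (hy : ∀ t ≥ a, HasDerivAt y (y' t) t) (bound : ∀ t ≥ a, y' t ≤ -β * y t + K) :
    ∀ t ≥ a, y t ≤ (y a - K / β) * exp (-β * (t - a)) + K / β := by
  intro t ht
  have hgronwall := le_gronwallBound_of_liminf_deriv_right_le (f := y) (b := t)
    (fun s hs => (hy s hs.1).continuousAt.continuousWithinAt)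
    (fun s hs _ hr => (hy s hs.1).hasDerivWithinAt.liminf_right_slope_le hr)
    le_rfl (fun s hs => bound s hs.1) t ⟨ht, le_rfl⟩
  rw [gronwallBound_of_K_ne_0 (neg_ne_zero.2 hβ)] at hgronwall
  convert hgronwall using 1
  field_simp
  ring

theorem exp_neg_mul_le_inv_of_log_div_le {β D t : ℝ} (hβ : 0 < β) (hD : 0 < D)
    (ht : log D / β ≤ t) : exp (-β * t) ≤ D⁻¹ := by
  rw [← exp_log (inv_pos.2 hD), exp_le_exp, log_inv, neg_mul, neg_le_neg_iff]
  exact (div_le_iff₀' hβ).1 ht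

theorem absorbing_ball_general (lam α C : ℝ)
    (hlam : 0 < lam) (hα : 0 ≤ α)
    (v : ℝ → lp (fun _ : ℤ => ℝ) 2) (Ed : ℝ → ℝ)
    (hE : ∀ t ≥ (0 : ℝ), HasDerivAt (fun s => ‖v s‖ ^ 2) (Ed t) t)
    (hE' : ∀ t ≥ (0 : ℝ), Ed t ≤ -(lam + 2 * α) * ‖v t‖ ^ 2 + C ^ 2 / lam) :
    ∀ r : ℝ, r > Real.sqrt (1 + C ^ 2 / (lam * (lam + 2 * α))) → ‖v 0‖ ≤ r →
      ∀ t ≥ (1 / (lam + 2 * α)) * Real.log (r ^ 2 - (1 + C ^ 2 / (lam * (lam + 2 * α))) + 1),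
        ‖v t‖ ≤ Real.sqrt (1 + C ^ 2 / (lam * (lam + 2 * α))) := by
  intro r hr hv0 t ht
  set β := lam + 2 * α
  set R2 := 1 + C ^ 2 / (lam * β)
  have hβ : 0 < β := by positivity
  have hR2r : R2 < r ^ 2 := (sqrt_lt' ((sqrt_nonneg _).trans_lt hr)).1 hr
  have hD : 1 < r ^ 2 - R2 + 1 := by linarith
  have hKβ : C ^ 2 / lam / β = R2 - 1 := by rw [div_div]; ring
  rw [one_div_mul_eq_div] at ht
  have ht0 : 0 ≤ t := (div_nonneg (log_nonneg hD.le) hβ.le).trans ht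
  have hdecay := le_exp_decay_of_hasDerivAt_le hβ.ne' hE hE' t ht0
  have hexp := exp_neg_mul_le_inv_of_log_div_le hβ (by linarith) ht
  have hv0sq : ‖v 0‖ ^ 2 ≤ r ^ 2 := pow_le_pow_left₀ (norm_nonneg _) hv0 2
  rw [hKβ, sub_zero] at hdecay
  refine le_sqrt_of_sq_le (hdecay.trans ?_)
  have : (‖v 0‖ ^ 2 - (R2 - 1)) * exp (-β * t) ≤ 1 := calc
    _ ≤ (r ^ 2 - R2 + 1) * exp (-β * t) := by gcongr; linarith
    _ ≤ (r ^ 2 - R2 + 1) * (r ^ 2 - R2 + 1)⁻¹ := by gcongr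
    _ = 1 := mul_inv_cancel₀ (by linarith)
  linarith

/-- The closed ball B[0, R] with R² = 1 + C²/(λ(λ+2α)) is an absorbing set:
any solution starting with ‖v(0)‖ ≤ r enters it after time L(r) = (λ+2α)⁻¹ ln(r²-R²+1). -/
theorem absorbing_ball (lam α C : ℝ)
    (hlam : 0 < lam) (hα : 0 ≤ α) (hC : 0 ≤ C)
    (v : ℝ → lp (fun _ : ℤ => ℝ) 2) (Ed : ℝ → ℝ)
    (hE : ∀ t ≥ (0 : ℝ), HasDerivAt (fun s => ‖v s‖ ^ 2) (Ed t) t)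
    (hE' : ∀ t ≥ (0 : ℝ), Ed t ≤ -(lam + 2 * α) * ‖v t‖ ^ 2 + C ^ 2 / lam) :
    ∀ r : ℝ, r > Real.sqrt (1 + C ^ 2 / (lam * (lam + 2 * α))) → ‖v 0‖ ≤ r →
      ∀ t ≥ (1 / (lam + 2 * α)) * Real.log (r ^ 2 - (1 + C ^ 2 / (lam * (lam + 2 * α))) + 1),
        ‖v t‖ ≤ Real.sqrt (1 + C ^ 2 / (lam * (lam + 2 * α))) :=
  absorbing_ball_general lam α C hlam hα v Ed hE hE'
end

section
/- Let ξ : [0,∞) → [0,1] be a C¹ cutoff function with ξ(s) = 0 for 0 ≤ s ≤ 1, ξ(s) = 1 for s ≥ 2, and |ξ'(s)| ≤ C₀ for all s ≥ 0. For k ∈ ℕ, k ≥ 1, set ξ_k(s) := ξ(s/k), and for u ∈ ℓ²(ℤ, ℝ) define v ∈ ℓ² by vᵢ = ξ_k(|i|)uᵢ. Then ⟨D⁺u, D⁺v⟩ ≥ -4C₀‖u‖²/k. -/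
/-!
Writing `A = ξ_k(|i+1|)`, `B = ξ_k(|i|)`, `x = uᵢ`, `y = u_{i+1}`, each summand is
`(y - x)(A y - B x) = (A - B)(y - x) y + B (y - x)²`. The second term is nonnegative, and by the
mean value theorem `|A - B| ≤ C₀ / k`, while `|(y - x) y| ≤ 2 (x² + y²)`; summing over `i` the
right-hand side contributes `2 (‖u‖² + ‖u‖²)`.
-/

lemma lp.summable_sq {ι : Type*} (u : lp (fun _ : ι => ℝ) 2) : Summable fun i => u i ^ 2 := by
  simpa [Real.rpow_natCast, Real.norm_eq_abs, sq_abs] using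
    (lp.memℓp u).summable (by norm_num : 0 < (2 : ENNReal).toReal)

lemma lp.norm_sq_eq_tsum_sq {ι : Type*} (u : lp (fun _ : ι => ℝ) 2) :
    ‖u‖ ^ 2 = ∑' i, u i ^ 2 := by
  simpa [Real.rpow_natCast, Real.norm_eq_abs, sq_abs] using
    lp.norm_rpow_eq_tsum (p := 2) (by norm_num) u

lemma abs_sub_mul_le_two_mul_sq_add_sq (x y : ℝ) : |(y - x) * y| ≤ 2 * (x ^ 2 + y ^ 2) := by
  rw [abs_le]
  constructor <;> nlinarith [sq_nonneg (x + y), sq_nonneg (x - y), sq_nonneg y]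

section Summand

variable {x y A B : ℝ}

lemma neg_two_mul_sq_add_sq_le_sub_mul_sub {δ : ℝ} (hB : 0 ≤ B) (hAB : |A - B| ≤ δ) :
    -(δ * (2 * (x ^ 2 + y ^ 2))) ≤ (y - x) * (A * y - B * x) := by
  have hsplit : (y - x) * (A * y - B * x) = (A - B) * ((y - x) * y) + B * (y - x) ^ 2 := by ring
  have hcross : |(A - B) * ((y - x) * y)| ≤ δ * (2 * (x ^ 2 + y ^ 2)) := by
    rw [abs_mul]
    exact mul_le_mul hAB (abs_sub_mul_le_two_mul_sq_add_sq x y) (abs_nonneg _)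
      ((abs_nonneg _).trans hAB)
  rw [hsplit]
  linarith [neg_abs_le ((A - B) * ((y - x) * y)), mul_nonneg hB (sq_nonneg (y - x))]

lemma abs_sub_mul_sub_le {M : ℝ} (hA : |A| ≤ M) (hB : |B| ≤ M) :
    |(y - x) * (A * y - B * x)| ≤ M * (2 * (x ^ 2 + y ^ 2)) := by
  have hM : 0 ≤ M := (abs_nonneg A).trans hA
  calc |(y - x) * (A * y - B * x)| ≤ (|y| + |x|) * (M * |y| + M * |x|) := by
        rw [abs_mul]
        gcongr
        · exact abs_sub _ _
        · calc |A * y - B * x| ≤ |A| * |y| + |B| * |x| := by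
                rw [← abs_mul, ← abs_mul]; exact abs_sub _ _
            _ ≤ M * |y| + M * |x| := by gcongr
    _ = M * (|x| + |y|) ^ 2 := by ring
    _ ≤ M * (2 * (x ^ 2 + y ^ 2)) := by
        gcongr
        nlinarith [sq_abs x, sq_abs y, sq_nonneg (|x| - |y|)]

end Summand

theorem neg_four_mul_norm_sq_le_tsum_sub_mul_sub (a : ℤ → ℝ) {M δ : ℝ}
    (ha : ∀ i, 0 ≤ a i) (haM : ∀ i, a i ≤ M) (hδ : ∀ i, |a (i + 1) - a i| ≤ δ)
    (u : lp (fun _ : ℤ => ℝ) 2) :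
    -(4 * δ * ‖u‖ ^ 2) ≤ ∑' i, (u (i + 1) - u i) * (a (i + 1) * u (i + 1) - a i * u i) := by
  have hsq := lp.summable_sq u
  have hsq_shift : Summable fun i : ℤ => u (i + 1) ^ 2 :=
    (Equiv.addRight (1 : ℤ)).summable_iff.mpr hsq
  have htsum_shift : ∑' i : ℤ, u (i + 1) ^ 2 = ∑' i, u i ^ 2 :=
    (Equiv.addRight (1 : ℤ)).tsum_eq fun i => u i ^ 2
  have hmaj : Summable fun i : ℤ => 2 * (u i ^ 2 + u (i + 1) ^ 2) := (hsq.add hsq_shift).mul_left 2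
  have habs : ∀ i, |a i| ≤ M := fun i => abs_le.mpr ⟨by linarith [ha i, haM i], haM i⟩
  have hsummable : Summable fun i : ℤ => (u (i + 1) - u i) * (a (i + 1) * u (i + 1) - a i * u i) :=
    Summable.of_norm_bounded (hmaj.mul_left M) fun i => abs_sub_mul_sub_le (habs _) (habs _)
  calc -(4 * δ * ‖u‖ ^ 2) = ∑' i : ℤ, -(δ * (2 * (u i ^ 2 + u (i + 1) ^ 2))) := by
        rw [tsum_neg, tsum_mul_left, tsum_mul_left, hsq.tsum_add hsq_shift, htsum_shift,
          lp.norm_sq_eq_tsum_sq]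
        ring
    _ ≤ _ := (hmaj.mul_left δ).neg.tsum_le_tsum
        (fun i => neg_two_mul_sq_add_sq_le_sub_mul_sub (ha i) (hδ i)) hsummable

lemma abs_sub_le_mul_abs_sub_of_hasDerivAt {f f' : ℝ → ℝ} {C : ℝ}
    (hf : ∀ s ≥ (0 : ℝ), HasDerivAt f (f' s) s) (hC : ∀ s ≥ (0 : ℝ), |f' s| ≤ C)
    {a b : ℝ} (ha : 0 ≤ a) (hb : 0 ≤ b) : |f a - f b| ≤ C * |a - b| :=
  (convex_Ici 0).norm_image_sub_le_of_norm_hasDerivWithin_le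
    (fun x hx => (hf x hx).hasDerivWithinAt) hC hb ha

lemma abs_abs_add_one_div_sub_abs_div_le (i : ℤ) (k : ℕ) :
    |((|i + 1| : ℤ) : ℝ) / k - ((|i| : ℤ) : ℝ) / k| ≤ 1 / k := by
  rw [div_sub_div_same, abs_div, Nat.abs_cast]
  refine div_le_div_of_nonneg_right ?_ k.cast_nonneg
  push_cast
  simpa using abs_abs_sub_abs_le_abs_sub ((i : ℝ) + 1) i

theorem cutoff_gradient_estimate_general (ξ ξd : ℝ → ℝ) (C₀ : ℝ)
    (hrange : ∀ s ≥ (0 : ℝ), ξ s ∈ Set.Icc (0 : ℝ) 1)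
    (hderiv : ∀ s ≥ (0 : ℝ), HasDerivAt ξ (ξd s) s)
    (hbound : ∀ s ≥ (0 : ℝ), |ξd s| ≤ C₀)
    (k : ℕ) (u : lp (fun _ : ℤ => ℝ) 2) :
    ∑' i : ℤ, (u (i + 1) - u i) *
        (ξ (((|i + 1| : ℤ) : ℝ) / k) * u (i + 1) - ξ (((|i| : ℤ) : ℝ) / k) * u i)
      ≥ -(4 * C₀ * ‖u‖ ^ 2) / k := by
  have hC₀ : 0 ≤ C₀ := (abs_nonneg _).trans (hbound 0 le_rfl)
  have harg : ∀ i : ℤ, 0 ≤ ((|i| : ℤ) : ℝ) / k := fun i => by positivity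
  have hstep : ∀ i : ℤ, |ξ (((|i + 1| : ℤ) : ℝ) / k) - ξ (((|i| : ℤ) : ℝ) / k)| ≤ C₀ / k :=
    fun i => calc
      _ ≤ C₀ * |((|i + 1| : ℤ) : ℝ) / k - ((|i| : ℤ) : ℝ) / k| :=
        abs_sub_le_mul_abs_sub_of_hasDerivAt hderiv hbound (harg _) (harg _)
      _ ≤ C₀ * (1 / k) := by gcongr; exact abs_abs_add_one_div_sub_abs_div_le i k
      _ = C₀ / k := mul_one_div _ _
  rw [ge_iff_le, show -(4 * C₀ * ‖u‖ ^ 2) / k = -(4 * (C₀ / k) * ‖u‖ ^ 2) by ring]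
  exact neg_four_mul_norm_sq_le_tsum_sub_mul_sub (fun i => ξ (((|i| : ℤ) : ℝ) / k))
    (fun i => (hrange _ (harg i)).1) (fun i => (hrange _ (harg i)).2) hstep u

/-- Cutoff estimate: ⟨D⁺u, D⁺v⟩ ≥ -4C₀‖u‖²/k for v defined by vᵢ = ξ(|i|/k)uᵢ. -/
theorem cutoff_gradient_estimate (ξ ξd : ℝ → ℝ) (C₀ : ℝ)
    (hrange : ∀ s ≥ (0 : ℝ), ξ s ∈ Set.Icc (0 : ℝ) 1)
    (h01 : ∀ s ∈ Set.Icc (0 : ℝ) 1, ξ s = 0)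
    (h2 : ∀ s ≥ (2 : ℝ), ξ s = 1)
    (hderiv : ∀ s ≥ (0 : ℝ), HasDerivAt ξ (ξd s) s)
    (hbound : ∀ s ≥ (0 : ℝ), |ξd s| ≤ C₀)
    (k : ℕ) (hk : 1 ≤ k) (u : lp (fun _ : ℤ => ℝ) 2) :
    ∑' i : ℤ, (u (i + 1) - u i) *
        (ξ (((|i + 1| : ℤ) : ℝ) / k) * u (i + 1) - ξ (((|i| : ℤ) : ℝ) / k) * u i)
      ≥ -(4 * C₀ * ‖u‖ ^ 2) / k :=
  cutoff_gradient_estimate_general ξ ξd C₀ hrange hderiv hbound k u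
end

section
/- Let φ : ℝ≥0 × ℓ² × Y → ℓ² be a cocycle over a dynamical system (Y, ℝ, σ) with Y compact, i.e., φ(0, u, y) = u and φ(t+τ, u, y) = φ(t, φ(τ, u, y), σ(τ, y)). Suppose B[0, R] ⊂ ℓ² is an absorbing ball: for every bounded B ⊂ ℓ² there exists L(B) ≥ 0 with φ(t, u, y) ∈ B[0, R] for all t ≥ L(B), u ∈ B, y ∈ Y. If, moreover, for every ε > 0 there exist k(ε) ∈ ℕ and L(ε) ≥ 0 with Σ_{|i| ≥ k(ε)} |φᵢ(t, v, y)|² < ε for all t ≥ L(ε), v ∈ B[0, R], y ∈ Y (asymptotic tails property), then for any bounded sequences u_n in ℓ², y_n in Y, and any t_n → ∞, the sequence φ(t_n, u_n, y_n) has a convergent subsequence in ℓ². -/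
/-!
By the cocycle identity, `φ(tₙ, uₙ, yₙ) = φ(tₙ - L₁, φ(L₁, uₙ, yₙ), σ(L₁, yₙ))` with the inner state
already in the absorbing ball, so for large `n` the sequence lies in that ball and has uniformly
small tails. Boundedness yields a coordinatewise convergent subsequence (a product of compact
intervals is sequentially compact), and uniformly small tails upgrade coordinatewise convergence
to convergence in `ℓ²`.
-/

open Filter Topology
open scoped ENNReal

theorem sum_sq_sub_le_add_sdiff {ι : Type*} [DecidableEq ι] (a b : ι → ℝ) (S F : Finset ι) :
    ∑ i ∈ S, (a i - b i) ^ 2 ≤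
      ∑ i ∈ F, (a i - b i) ^ 2 + 2 * ∑ i ∈ S \ F, a i ^ 2 + 2 * ∑ i ∈ S \ F, b i ^ 2 := by
  rw [← Finset.sum_inter_add_sum_sdiff S F, add_assoc, Finset.mul_sum, Finset.mul_sum,
    ← Finset.sum_add_distrib]
  gcongr ?_ + ?_
  · exact Finset.sum_le_sum_of_subset_of_nonneg Finset.inter_subset_right fun i _ _ => sq_nonneg _
  · exact Finset.sum_le_sum fun i _ => by nlinarith [sq_nonneg (a i + b i)]

theorem cocycle_forall_ge_add {X Y : Type*} {σ : ℝ → Y → Y} {φ : ℝ → X → Y → X}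
    (hcocycle : ∀ t ≥ (0 : ℝ), ∀ τ ≥ (0 : ℝ), ∀ u y, φ (t + τ) u y = φ t (φ τ u y) (σ τ y))
    {A B C : Set X} {L L₁ : ℝ} (hL : 0 ≤ L) (hL₁ : 0 ≤ L₁)
    (hBA : ∀ u ∈ B, ∀ y, φ L₁ u y ∈ A) (hAC : ∀ t ≥ L, ∀ v ∈ A, ∀ y, φ t v y ∈ C) :
    ∀ t ≥ L + L₁, ∀ u ∈ B, ∀ y, φ t u y ∈ C := by
  intro t ht u hu y
  have hsplit := hcocycle (t - L₁) (by linarith) L₁ hL₁ u y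
  rw [sub_add_cancel] at hsplit
  rw [hsplit]
  exact hAC _ (by linarith) _ (hBA u hu y) _

namespace lp

variable {ι : Type*}

theorem exists_subseq_tendsto_apply [Countable ι] {p : ℝ≥0∞} [Fact (1 ≤ p)]
    (f : ℕ → lp (fun _ : ι => ℝ) p) {R : ℝ} (hf : ∀ᶠ n in atTop, ‖f n‖ ≤ R) :
    ∃ (w : lp (fun _ : ι => ℝ) p) (s : ℕ → ℕ), StrictMono s ∧
      ∀ i, Tendsto (fun n => f (s n) i) atTop (𝓝 (w i)) := by
  have hp : p ≠ 0 := (zero_lt_one.trans_le (Fact.out : 1 ≤ p)).ne'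
  have hcoord : ∀ᶠ n in atTop, ⇑(f n) ∈ Set.univ.pi fun _ : ι => Set.Icc (-R) R :=
    hf.mono fun n hn i _ => abs_le.1 ((norm_apply_le_norm hp (f n) i).trans hn)
  obtain ⟨g, -, s, hs, hg⟩ :=
    (isCompact_univ_pi fun _ => isCompact_Icc).tendsto_subseq' hcoord.frequently
  obtain ⟨M, hM⟩ := eventually_atTop.1 (hs.tendsto_atTop.eventually hf)
  have hgp : Memℓp g p := memℓp_of_tendsto (F := fun n => f (s (n + M)))
    (isBounded_iff_forall_norm_le.2 ⟨R, Set.forall_mem_range.2 fun n => hM _ (Nat.le_add_left _ _)⟩)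
    (hg.comp (tendsto_add_atTop_nat M))
  exact ⟨⟨g, hgp⟩, s, hs, tendsto_pi_nhds.1 hg⟩

theorem summable_sq_s18 (f : lp (fun _ : ι => ℝ) 2) : Summable fun i => f i ^ 2 := by
  simpa only [ENNReal.toReal_ofNat, Real.rpow_two, Real.norm_eq_abs, sq_abs] using
    (lp.memℓp f).summable (by norm_num)

theorem sum_sq_le_tsum_subtype (f : lp (fun _ : ι => ℝ) 2) {p : ι → Prop} {S : Finset ι}
    (hS : ∀ i ∈ S, p i) : ∑ i ∈ S, f i ^ 2 ≤ ∑' i : {i // p i}, f i ^ 2 := by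
  classical
  rw [← Finset.sum_subtype_of_mem _ hS]
  exact ((summable_sq_s18 f).subtype p).sum_le_tsum _ fun i _ => sq_nonneg _

theorem norm_le_of_forall_sum_sq_le (f : lp (fun _ : ι => ℝ) 2) {ε : ℝ} (hε : 0 ≤ ε)
    (h : ∀ S : Finset ι, ∑ i ∈ S, f i ^ 2 ≤ ε ^ 2) : ‖f‖ ≤ ε :=
  norm_le_of_forall_sum_le (by norm_num) hε fun S => by
    simpa only [ENNReal.toReal_ofNat, Real.rpow_two, Real.norm_eq_abs, sq_abs] using h S

theorem tendsto_of_tendsto_apply_of_tails {α : Type*} {l : Filter α} [l.NeBot]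
    {f : α → lp (fun _ : ι => ℝ) 2} {w : lp (fun _ : ι => ℝ) 2}
    (hf : ∀ i, Tendsto (fun n => f n i) l (𝓝 (w i)))
    (htail : ∀ ε > 0, ∃ F : Finset ι, ∀ᶠ n in l,
      ∀ S : Finset ι, Disjoint S F → ∑ i ∈ S, f n i ^ 2 ≤ ε) :
    Tendsto f l (𝓝 w) := by
  classical
  suffices h : ∀ ε > 0, ∀ᶠ n in l, ‖f n - w‖ ≤ ε from
    Metric.tendsto_nhds.2 fun ε hε => (h (ε / 2) (half_pos hε)).mono fun n hn => by
      rw [dist_eq_norm]; linarith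
  intro ε hε
  obtain ⟨F, hF⟩ := htail (ε ^ 2 / 8) (by positivity)
  have hw : ∀ S : Finset ι, Disjoint S F → ∑ i ∈ S, w i ^ 2 ≤ ε ^ 2 / 8 := fun S hS =>
    le_of_tendsto (tendsto_finsetSum S fun i _ => (hf i).pow 2) (hF.mono fun n hn => hn S hS)
  have hnear : ∀ᶠ n in l, ∑ i ∈ F, (f n i - w i) ^ 2 < ε ^ 2 / 2 := by
    refine Tendsto.eventually_lt_const (by positivity) ?_
    simpa using tendsto_finsetSum F fun i _ => ((hf i).sub_const (w i)).pow 2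
  filter_upwards [hF, hnear] with n hfn hn
  refine norm_le_of_forall_sum_sq_le _ hε.le fun S => ?_
  calc ∑ i ∈ S, (f n - w) i ^ 2 = ∑ i ∈ S, (f n i - w i) ^ 2 := rfl
    _ ≤ ∑ i ∈ F, (f n i - w i) ^ 2 + 2 * ∑ i ∈ S \ F, f n i ^ 2 + 2 * ∑ i ∈ S \ F, w i ^ 2 :=
      sum_sq_sub_le_add_sdiff _ _ S F
    _ ≤ ε ^ 2 / 2 + 2 * (ε ^ 2 / 8) + 2 * (ε ^ 2 / 8) := by
      gcongr
      exacts [hfn _ Finset.sdiff_disjoint, hw _ Finset.sdiff_disjoint]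
    _ = ε ^ 2 := by ring

end lp

theorem Int.le_abs_of_notMem_Ioo {k i : ℤ} (hi : i ∉ Finset.Ioo (-k) k) : k ≤ |i| := by
  rw [Finset.mem_Ioo] at hi
  rw [le_abs']
  omega

theorem cocycle_asymptotic_compactness_general
    {Y : Type*}
    (σ : ℝ → Y → Y)
    (φ : ℝ → lp (fun _ : ℤ => ℝ) 2 → Y → lp (fun _ : ℤ => ℝ) 2)
    (hcocycle : ∀ t ≥ (0 : ℝ), ∀ τ ≥ (0 : ℝ), ∀ (u : lp (fun _ : ℤ => ℝ) 2) (y : Y),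
      φ (t + τ) u y = φ t (φ τ u y) (σ τ y))
    (R : ℝ)
    (habsorb : ∀ B : Set (lp (fun _ : ℤ => ℝ) 2), Bornology.IsBounded B →
      ∃ L ≥ (0 : ℝ), ∀ t ≥ L, ∀ u ∈ B, ∀ y : Y, ‖φ t u y‖ ≤ R)
    (htails : ∀ ε > (0 : ℝ), ∃ (k : ℕ) (L : ℝ), 0 ≤ L ∧ ∀ t ≥ L,
      ∀ v : lp (fun _ : ℤ => ℝ) 2, ‖v‖ ≤ R → ∀ y : Y,
        ∑' i : {i : ℤ // (k : ℤ) ≤ |i|}, (φ t v y (i : ℤ)) ^ 2 < ε) :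
    ∀ (u : ℕ → lp (fun _ : ℤ => ℝ) 2), Bornology.IsBounded (Set.range u) →
    ∀ (y : ℕ → Y) (tn : ℕ → ℝ), (∀ n, 0 ≤ tn n) → Tendsto tn atTop atTop →
      ∃ (w : lp (fun _ : ℤ => ℝ) 2) (s : ℕ → ℕ), StrictMono s ∧
        Tendsto (fun n => φ (tn (s n)) (u (s n)) (y (s n))) atTop (nhds w) := by
  intro u hu y tn _ htn
  obtain ⟨L₁, hL₁, habs⟩ := habsorb (Set.range u) hu
  have heventually {C : Set (lp (fun _ : ℤ => ℝ) 2)} {L : ℝ}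
      (hC : ∀ t ≥ L, ∀ v ∈ Set.range u, ∀ y', φ t v y' ∈ C) :
      ∀ᶠ n in atTop, φ (tn n) (u n) (y n) ∈ C :=
    (htn.eventually_ge_atTop L).mono fun n hn => hC _ hn _ ⟨n, rfl⟩ _
  obtain ⟨w, s, hs, hw⟩ := lp.exists_subseq_tendsto_apply _ (heventually (C := {v | ‖v‖ ≤ R}) habs)
  refine ⟨w, s, hs, lp.tendsto_of_tendsto_apply_of_tails hw fun ε hε => ?_⟩
  obtain ⟨k, L, hL, htail⟩ := htails ε hε
  have hsmall := cocycle_forall_ge_add (A := {v | ‖v‖ ≤ R})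
    (C := {v | ∑' i : {i : ℤ // (k : ℤ) ≤ |i|}, v i ^ 2 < ε}) hcocycle hL hL₁
    (fun v hv y' => habs L₁ le_rfl v hv y') htail
  refine ⟨Finset.Ioo (-(k : ℤ)) k,
    (hs.tendsto_atTop.eventually (heventually hsmall)).mono fun n hn S hS => ?_⟩
  exact (lp.sum_sq_le_tsum_subtype _ fun i hi =>
    Int.le_abs_of_notMem_Ioo (Finset.disjoint_left.1 hS hi)).trans (le_of_lt hn)

/-- Asymptotic compactness of a cocycle on ℓ²(ℤ, ℝ): an absorbing ball together with
the asymptotic tails property yields precompactness of φ(t_n, u_n, y_n) for bounded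
data and t_n → ∞. -/
theorem cocycle_asymptotic_compactness
    {Y : Type*} [MetricSpace Y] [CompactSpace Y]
    (σ : ℝ → Y → Y)
    (φ : ℝ → lp (fun _ : ℤ => ℝ) 2 → Y → lp (fun _ : ℤ => ℝ) 2)
    (hcocycle0 : ∀ (u : lp (fun _ : ℤ => ℝ) 2) (y : Y), φ 0 u y = u)
    (hcocycle : ∀ t ≥ (0 : ℝ), ∀ τ ≥ (0 : ℝ), ∀ (u : lp (fun _ : ℤ => ℝ) 2) (y : Y),
      φ (t + τ) u y = φ t (φ τ u y) (σ τ y))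
    (R : ℝ)
    (habsorb : ∀ B : Set (lp (fun _ : ℤ => ℝ) 2), Bornology.IsBounded B →
      ∃ L ≥ (0 : ℝ), ∀ t ≥ L, ∀ u ∈ B, ∀ y : Y, ‖φ t u y‖ ≤ R)
    (htails : ∀ ε > (0 : ℝ), ∃ (k : ℕ) (L : ℝ), 0 ≤ L ∧ ∀ t ≥ L,
      ∀ v : lp (fun _ : ℤ => ℝ) 2, ‖v‖ ≤ R → ∀ y : Y,
        ∑' i : {i : ℤ // (k : ℤ) ≤ |i|}, (φ t v y (i : ℤ)) ^ 2 < ε) :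
    ∀ (u : ℕ → lp (fun _ : ℤ => ℝ) 2), Bornology.IsBounded (Set.range u) →
    ∀ (y : ℕ → Y) (tn : ℕ → ℝ), (∀ n, 0 ≤ tn n) → Tendsto tn atTop atTop →
      ∃ (w : lp (fun _ : ℤ => ℝ) 2) (s : ℕ → ℕ), StrictMono s ∧
        Tendsto (fun n => φ (tn (s n)) (u (s n)) (y (s n))) atTop (nhds w) :=
  cocycle_asymptotic_compactness_general σ φ hcocycle R habsorb htails
end
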